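/- arXiv:1505.06155 — 2 statements merged into one kernel-verified Lean document; each statement's English description precedes it below -/
import Mathlib

section
/- Let G and H be connected graphs, each with at least two vertices. If H is bipartite and the diameter of G satisfies D(G) < r(H), where r(H) is the radius of H, then dim_l(G ⊠ H) ≤ |V(H)|·dim_l(G). -/
/-!
Let `S` be a local metric basis of `G`; then `S × V(H)` is a local metric generator of `G ⊠ H`,
because distances in `G ⊠ H` are the maximum of the distances in the two factors. An edge that
moves in `G` is resolved by a vertex `(s, ·)` where `s ∈ S` resolves its `G`-projection. An edge
`(a, b)(a, d)` inside an `H`-fibre is resolved by `(s, t)` with `s ∈ S` arbitrary and `t` at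
maximal distance from `b`: as `D(G) < r(H) ≤ d_H(b, t)`, both distances to `(s, t)` are the
`H`-distances `d_H(b, t)` and `d_H(d, t)`, which differ because `H` is bipartite.
-/

open SimpleGraph

/-- The strong product of two simple graphs. -/
def strongProd {α β : Type*} (G : SimpleGraph α) (H : SimpleGraph β) :
    SimpleGraph (α × β) where
  Adj x y := (x.1 = y.1 ∧ H.Adj x.2 y.2) ∨ (x.2 = y.2 ∧ G.Adj x.1 y.1) ∨
      (G.Adj x.1 y.1 ∧ H.Adj x.2 y.2)
  symm := by
    constructor
    rintro x y (⟨h1, h2⟩ | ⟨h1, h2⟩ | ⟨h1, h2⟩)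
    · exact Or.inl ⟨h1.symm, h2.symm⟩
    · exact Or.inr (Or.inl ⟨h1.symm, h2.symm⟩)
    · exact Or.inr (Or.inr ⟨h1.symm, h2.symm⟩)
  loopless := by
    constructor
    rintro x (⟨_, h⟩ | ⟨_, h⟩ | ⟨h, _⟩)
    · exact H.irrefl h
    · exact G.irrefl h
    · exact G.irrefl h

/-- A set `S` is a local metric generator for `G` if every pair of adjacent
vertices is distinguished by some element of `S`. -/
def IsLocalMetricGenerator {α : Type*} (G : SimpleGraph α) (S : Set α) : Prop :=
  ∀ u v : α, G.Adj u v → ∃ s ∈ S, G.dist u s ≠ G.dist v s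

/-- The local metric dimension of a graph. -/
noncomputable def localMetricDim {α : Type*} [Fintype α] (G : SimpleGraph α) : ℕ :=
  sInf {n | ∃ S : Finset α, S.card = n ∧ IsLocalMetricGenerator G ↑S}

/-- A set `S` is a metric generator for `G` if every pair of distinct
vertices is distinguished by some element of `S`. -/
def IsMetricGenerator {α : Type*} (G : SimpleGraph α) (S : Set α) : Prop :=
  ∀ u v : α, u ≠ v → ∃ s ∈ S, G.dist u s ≠ G.dist v s

/-- The metric dimension of a graph. -/
noncomputable def metricDim {α : Type*} [Fintype α] (G : SimpleGraph α) : ℕ :=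
  sInf {n | ∃ S : Finset α, S.card = n ∧ IsMetricGenerator G ↑S}

/-- The eccentricity of a vertex: the maximum distance to another vertex. -/
noncomputable def eccentricity {α : Type*} (G : SimpleGraph α) (v : α) : ℕ :=
  sSup {d | ∃ u, G.dist v u = d}

/-- The diameter of a graph: maximum eccentricity. -/
noncomputable def graphDiam {α : Type*} (G : SimpleGraph α) : ℕ :=
  sSup {d | ∃ v, eccentricity G v = d}

/-- The radius of a graph: minimum eccentricity. -/
noncomputable def graphRadius {α : Type*} (G : SimpleGraph α) : ℕ :=
  sInf {d | ∃ v, eccentricity G v = d}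

/-- The interval `I[x,y]`: vertices lying on some shortest `x`–`y` path. -/
def interval {α : Type*} (G : SimpleGraph α) (x y : α) : Set α :=
  {w | G.dist x w + G.dist w y = G.dist x y}

/-- A graph is adjacency `k`-resolved if for every pair of adjacent vertices
`x, y` there is a vertex `w` with `d(y,w) ≥ k` and `x ∈ I[y,w]`, or
`d(x,w) ≥ k` and `y ∈ I[x,w]`. -/
def AdjKResolved {α : Type*} (G : SimpleGraph α) (k : ℕ) : Prop :=
  ∀ x y : α, G.Adj x y →
    ∃ w : α, (k ≤ G.dist y w ∧ x ∈ interval G y w) ∨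
      (k ≤ G.dist x w ∧ y ∈ interval G x w)

/-- The true twin equivalence relation: `u ≈ v` iff `N[u] = N[v]`. -/
def trueTwinSetoid {α : Type*} (G : SimpleGraph α) : Setoid α where
  r u v := insert u (G.neighborSet u) = insert v (G.neighborSet v)
  iseqv := ⟨fun _ => rfl, Eq.symm, Eq.trans⟩
namespace SimpleGraph

variable {V W : Type*} {G : SimpleGraph V} {K : SimpleGraph W}

lemma dist_le_one_of_eq_or_adj {u v : V} (h : u = v ∨ G.Adj u v) : G.dist u v ≤ 1 := by
  rcases h with rfl | h
  · simp
  · exact (dist_eq_one_iff_adj.mpr h).le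

lemma Walk.dist_apply_le_length (hK : K.Connected) {f : V → W}
    (hf : ∀ ⦃x y⦄, G.Adj x y → K.dist (f x) (f y) ≤ 1) {x y : V} (w : G.Walk x y) :
    K.dist (f x) (f y) ≤ w.length := by
  induction w with
  | nil => simp
  | @cons x y z h p ih =>
    calc K.dist (f x) (f z) ≤ K.dist (f x) (f y) + K.dist (f y) (f z) := hK.dist_triangle
      _ ≤ p.length + 1 := by have := hf h; omega
      _ = (cons h p).length := (Walk.length_cons h p).symm

/-- Equal distances would close a walk of odd length through the edge `uv`. -/
lemma Connected.dist_ne_of_adj_of_colorable_two (hG : G.Connected) (hbip : G.Colorable 2)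
    {u v : V} (huv : G.Adj u v) (t : V) : G.dist u t ≠ G.dist v t := by
  intro heq
  obtain ⟨p, hp⟩ := hG.exists_walk_length_eq_dist v t
  obtain ⟨q, hq⟩ := hG.exists_walk_length_eq_dist u t
  have hodd : ¬Even (Walk.cons huv (p.append q.reverse)).length := by
    rw [Walk.length_cons, Walk.length_append, Walk.length_reverse, hp, hq, heq,
      Nat.even_add_one, not_not]
    exact ⟨_, rfl⟩
  exact hodd (two_colorable_iff_forall_loop_even.mp hbip u _)

end SimpleGraph

section StrongProd

variable {α β : Type*} {G : SimpleGraph α} {H : SimpleGraph β}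

lemma strongProd_fst_eq_or_adj {x y : α × β} (h : (strongProd G H).Adj x y) :
    x.1 = y.1 ∨ G.Adj x.1 y.1 := by
  rcases h with ⟨h, _⟩ | ⟨_, h⟩ | ⟨h, _⟩ <;> simp [h]

lemma strongProd_snd_eq_or_adj {x y : α × β} (h : (strongProd G H).Adj x y) :
    x.2 = y.2 ∨ H.Adj x.2 y.2 := by
  rcases h with ⟨_, h⟩ | ⟨h, _⟩ | ⟨_, h⟩ <;> simp [h]

variable (G H) in
def strongProdLeft (b : β) : G →g strongProd G H where
  toFun a := (a, b)
  map_rel' h := Or.inr (Or.inl ⟨rfl, h⟩)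

variable (G H) in
def strongProdRight (a : α) : H →g strongProd G H where
  toFun b := (a, b)
  map_rel' h := Or.inl ⟨rfl, h⟩

lemma strongProd_exists_walk_length_eq_max {a c : α} {b d : β} (p : G.Walk a c)
    (q : H.Walk b d) :
    ∃ w : (strongProd G H).Walk (a, b) (c, d), w.length = max p.length q.length := by
  induction p generalizing b with
  | nil => exact ⟨q.map (strongProdRight G H _), (Walk.length_map _ _).trans (by simp)⟩
  | cons h p ih =>
    cases q with
    | nil =>
      exact ⟨(Walk.cons h p).map (strongProdLeft G H _), (Walk.length_map _ _).trans (by simp)⟩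
    | cons h' q =>
      obtain ⟨w, hw⟩ := ih q
      have hdiag : (strongProd G H).Adj (_, _) (_, _) := Or.inr (Or.inr ⟨h, h'⟩)
      refine ⟨Walk.cons hdiag w, ?_⟩
      rw [Walk.length_cons, Walk.length_cons, Walk.length_cons, hw]
      omega

lemma strongProd_dist (hG : G.Connected) (hH : H.Connected) (a c : α) (b d : β) :
    (strongProd G H).dist (a, b) (c, d) = max (G.dist a c) (H.dist b d) := by
  obtain ⟨p, hp⟩ := hG.exists_walk_length_eq_dist a c
  obtain ⟨q, hq⟩ := hH.exists_walk_length_eq_dist b d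
  obtain ⟨w, hw⟩ := strongProd_exists_walk_length_eq_max p q
  obtain ⟨w', hw'⟩ := w.reachable.exists_walk_length_eq_dist
  refine le_antisymm ?_ ?_
  · calc (strongProd G H).dist (a, b) (c, d) ≤ w.length := dist_le w
      _ = max (G.dist a c) (H.dist b d) := by rw [hw, hp, hq]
  · rw [← hw']
    exact max_le
      (w'.dist_apply_le_length hG fun _ _ h ↦
        dist_le_one_of_eq_or_adj (strongProd_fst_eq_or_adj h))
      (w'.dist_apply_le_length hH fun _ _ h ↦
        dist_le_one_of_eq_or_adj (strongProd_snd_eq_or_adj h))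

end StrongProd

section Eccentricity

variable {V : Type*} (G : SimpleGraph V)

lemma graphRadius_le_eccentricity (v : V) : graphRadius G ≤ eccentricity G v :=
  Nat.sInf_le ⟨v, rfl⟩

variable [Finite V]

lemma bddAbove_setOf_dist_eq (v : V) : BddAbove {d | ∃ u, G.dist v u = d} :=
  (Set.finite_range (G.dist v)).bddAbove

lemma dist_le_eccentricity (v u : V) : G.dist v u ≤ eccentricity G v :=
  le_csSup (bddAbove_setOf_dist_eq G v) ⟨u, rfl⟩

lemma exists_dist_eq_eccentricity (v : V) : ∃ u, G.dist v u = eccentricity G v :=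
  Nat.sSup_mem ⟨0, show ∃ u, G.dist v u = 0 from ⟨v, G.dist_self⟩⟩
    (bddAbove_setOf_dist_eq G v)

lemma eccentricity_le_graphDiam (v : V) : eccentricity G v ≤ graphDiam G :=
  le_csSup (Set.finite_range (eccentricity G)).bddAbove ⟨v, rfl⟩

lemma dist_le_graphDiam (u v : V) : G.dist u v ≤ graphDiam G :=
  (dist_le_eccentricity G u v).trans (eccentricity_le_graphDiam G u)

end Eccentricity

section LocalMetricDim

variable {V : Type*} (G : SimpleGraph V)

lemma isLocalMetricGenerator_univ : IsLocalMetricGenerator G Set.univ :=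
  fun u v huv ↦ ⟨u, trivial, by
    rw [G.dist_self, ne_comm, dist_ne_zero_iff_ne_and_reachable]
    exact ⟨huv.ne', huv.reachable.symm⟩⟩

variable [Fintype V]

lemma localMetricDim_le_card {S : Finset V} (hS : IsLocalMetricGenerator G S) :
    localMetricDim G ≤ S.card :=
  Nat.sInf_le ⟨S, rfl, hS⟩

lemma exists_isLocalMetricGenerator_card_eq_localMetricDim :
    ∃ S : Finset V, S.card = localMetricDim G ∧ IsLocalMetricGenerator G S :=
  Nat.sInf_mem (s := {n | ∃ S : Finset V, S.card = n ∧ IsLocalMetricGenerator G S})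
    ⟨_, Finset.univ, rfl, by simpa using isLocalMetricGenerator_univ G⟩

end LocalMetricDim

section LocalMetricGeneratorStrongProd

variable {α β : Type*} {G : SimpleGraph α} {H : SimpleGraph β}

lemma strongProd_dist_lt_of_dist_fst_lt (hG : G.Connected) (hH : H.Connected) {x y : α × β}
    {s : α} (h : G.dist x.1 s < G.dist y.1 s) :
    (strongProd G H).dist x (s, x.2) < (strongProd G H).dist y (s, x.2) := by
  obtain ⟨a, b⟩ := x
  obtain ⟨c, d⟩ := y
  rw [strongProd_dist hG hH, strongProd_dist hG hH, dist_self, max_eq_left (Nat.zero_le _)]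
  exact h.trans_le (le_max_left _ _)

lemma strongProd_dist_eq_snd [Finite α] (hG : G.Connected) (hH : H.Connected) {a c : α}
    {b d : β} (h : graphDiam G ≤ H.dist b d) :
    (strongProd G H).dist (a, b) (c, d) = H.dist b d := by
  rw [strongProd_dist hG hH]
  exact max_eq_right ((dist_le_graphDiam G a c).trans h)

theorem IsLocalMetricGenerator.strongProd_prod_univ [Finite α] [Finite β] (hG : G.Connected)
    (hH : H.Connected) (hbip : H.Colorable 2) (hD : graphDiam G < graphRadius H) {S : Set α}
    (hS : IsLocalMetricGenerator G S) {s₀ : α} (hs₀ : s₀ ∈ S) :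
    IsLocalMetricGenerator (strongProd G H) (S ×ˢ Set.univ) := by
  rintro ⟨a, b⟩ ⟨c, d⟩ hadj
  obtain hac | hac := strongProd_fst_eq_or_adj hadj
  · obtain rfl : a = c := hac
    have hbd : H.Adj b d :=
      (strongProd_snd_eq_or_adj hadj).resolve_left fun hbd ↦ hadj.ne (by simp_all)
    obtain ⟨t, hecc⟩ := exists_dist_eq_eccentricity H b
    have hbt : graphDiam G < H.dist b t := hecc ▸ hD.trans_le (graphRadius_le_eccentricity H b)
    have hdt : graphDiam G ≤ H.dist d t := by
      have := hH.dist_triangle (u := b) (v := d) (w := t)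
      rw [dist_eq_one_iff_adj.mpr hbd] at this
      omega
    refine ⟨(s₀, t), ⟨hs₀, trivial⟩, ?_⟩
    rw [strongProd_dist_eq_snd hG hH hbt.le, strongProd_dist_eq_snd hG hH hdt]
    exact hH.dist_ne_of_adj_of_colorable_two hbip hbd t
  · obtain ⟨s, hs, hne⟩ := hS a c hac
    rcases hne.lt_or_gt with hlt | hgt
    · exact ⟨(s, b), ⟨hs, trivial⟩, (strongProd_dist_lt_of_dist_fst_lt hG hH hlt).ne⟩
    · exact ⟨(s, d), ⟨hs, trivial⟩,
        (strongProd_dist_lt_of_dist_fst_lt (x := (c, d)) hG hH hgt).ne'⟩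

end LocalMetricGeneratorStrongProd

theorem stmt3_general {α β : Type*} [Fintype α] [Fintype β]
    (G : SimpleGraph α) (H : SimpleGraph β)
    (hG : G.Connected) (hH : H.Connected)
    (hn1 : 2 ≤ Fintype.card α)
    (hbip : H.Colorable 2) (hD : graphDiam G < graphRadius H) :
    localMetricDim (strongProd G H) ≤ Fintype.card β * localMetricDim G := by
  obtain ⟨S, hScard, hS⟩ := exists_isLocalMetricGenerator_card_eq_localMetricDim G
  have : Nontrivial α := Fintype.one_lt_card_iff_nontrivial.mp hn1
  obtain ⟨v, huv⟩ := hG.preconnected.exists_adj_of_nontrivial (Classical.arbitrary α)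
  obtain ⟨s₀, hs₀, -⟩ := hS _ v huv
  have hSH : IsLocalMetricGenerator (strongProd G H) ↑(S ×ˢ (Finset.univ : Finset β)) := by
    simpa [Finset.coe_product] using hS.strongProd_prod_univ hG hH hbip hD hs₀
  calc localMetricDim (strongProd G H)
      ≤ (S ×ˢ Finset.univ).card := localMetricDim_le_card _ hSH
    _ = Fintype.card β * localMetricDim G := by
      rw [Finset.card_product, Finset.card_univ, hScard, mul_comm]

/-- if `H` is bipartite and `D(G) < r(H)`, then
`dim_l(G ⊠ H) ≤ |V(H)| · dim_l(G)`. -/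
theorem stmt3 {α β : Type*} [Fintype α] [Fintype β]
    (G : SimpleGraph α) (H : SimpleGraph β)
    (hG : G.Connected) (hH : H.Connected)
    (hn1 : 2 ≤ Fintype.card α) (hn2 : 2 ≤ Fintype.card β)
    (hbip : H.Colorable 2) (hD : graphDiam G < graphRadius H) :
    localMetricDim (strongProd G H) ≤ Fintype.card β * localMetricDim G :=
  stmt3_general G H hG hH hn1 hbip hD
end

section
/- Let G and H be connected graphs, each with at least two vertices, of order n₁ and n₂ and having t₁ and t₂ true twin equivalence classes respectively. If dim_l(G) = n₁ − t₁ and dim_l(H) = n₂ − t₂, then dim_l(G ⊠ H) = n₁n₂ − t₁t₂. -/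
open SimpleGraph

/-!
True twins are adjacent and every other vertex is equidistant from them, so a local metric
generator omits at most one vertex of each true twin class: `n - t ≤ dim_l` for every graph.
Closed neighbourhoods in `G ⊠ H` are products of closed neighbourhoods, so the true twin classes
of `G ⊠ H` are the products of those of `G` and `H`, and the lower bound `n₁n₂ - t₁t₂` follows.
Conversely, distances in `G ⊠ H` are maxima of the coordinate distances, hence for local metric
generators `S₁`, `S₂` the set `S₁ × V(H) ∪ V(G) × S₂` is one for `G ⊠ H`; its complement
`S₁ᶜ × S₂ᶜ` has `t₁t₂` elements when `S₁` and `S₂` are minimum.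
-/

namespace SimpleGraph

variable {α β : Type*} {G : SimpleGraph α} {H : SimpleGraph β}

section TrueTwins

lemma adj_of_trueTwin {u v : α} (hne : u ≠ v) (h : trueTwinSetoid G u v) : G.Adj u v := by
  have hv : v ∈ insert u (G.neighborSet u) := (show _ = _ from h) ▸ Set.mem_insert v _
  exact (Set.mem_insert_iff.mp hv).resolve_left hne.symm

lemma dist_le_of_trueTwin {u v s : α} (h : trueTwinSetoid G u v) (hsu : s ≠ u) :
    G.dist v s ≤ G.dist u s := by
  by_cases hus : G.Reachable u s
  · obtain ⟨p, hp⟩ := hus.exists_walk_length_eq_dist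
    cases p with
    | nil => exact absurd rfl hsu
    | @cons _ w _ huw p =>
      have hw : w ∈ insert v (G.neighborSet v) :=
        (show _ = _ from h) ▸ Set.mem_insert_of_mem u huw
      rw [← hp, Walk.length_cons]
      rcases Set.mem_insert_iff.mp hw with rfl | hvw
      · exact (dist_le p).trans (Nat.le_succ _)
      · exact dist_le (Walk.cons hvw p)
  · have hvu : G.Reachable v u := by
      by_cases huv : u = v
      · exact huv ▸ Reachable.refl u
      · exact (adj_of_trueTwin huv h).symm.reachable
    rw [dist_eq_zero_of_not_reachable fun hvs => hus (hvu.symm.trans hvs)]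
    exact Nat.zero_le _

lemma dist_eq_of_trueTwin {u v s : α} (h : trueTwinSetoid G u v) (hsu : s ≠ u) (hsv : s ≠ v) :
    G.dist u s = G.dist v s :=
  le_antisymm (dist_le_of_trueTwin ((trueTwinSetoid G).symm h) hsv) (dist_le_of_trueTwin h hsu)

lemma card_trueTwin_le [Fintype α] (G : SimpleGraph α) :
    Nat.card (Quotient (trueTwinSetoid G)) ≤ Fintype.card α := by
  rw [← Nat.card_eq_fintype_card]
  exact Nat.card_le_card_of_surjective _ Quotient.exists_rep

end TrueTwins

section LocalMetricDim

lemma isLocalMetricGenerator_univ [Fintype α] (G : SimpleGraph α) :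
    IsLocalMetricGenerator G (Finset.univ : Finset α) := by
  intro u v huv
  refine ⟨u, Finset.mem_coe.mpr (Finset.mem_univ u), ?_⟩
  rw [SimpleGraph.dist_self, dist_comm, dist_eq_one_iff_adj.mpr huv]
  exact zero_ne_one

lemma exists_isLocalMetricGenerator_card_eq_localMetricDim [Fintype α] (G : SimpleGraph α) :
    ∃ S : Finset α, S.card = localMetricDim G ∧ IsLocalMetricGenerator G S :=
  Nat.sInf_mem (s := {n | ∃ S : Finset α, S.card = n ∧ IsLocalMetricGenerator G S})
    ⟨_, _, rfl, isLocalMetricGenerator_univ G⟩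

lemma _root_.IsLocalMetricGenerator.card_sub_card_trueTwin_le [Fintype α] {S : Finset α}
    (hS : IsLocalMetricGenerator G S) :
    Fintype.card α - Nat.card (Quotient (trueTwinSetoid G)) ≤ S.card := by
  classical
  have hinj : Function.Injective fun x : {x // x ∈ Sᶜ} => Quotient.mk (trueTwinSetoid G) x.1 := by
    rintro ⟨x, hx⟩ ⟨y, hy⟩ hxy
    have htwin : trueTwinSetoid G x y := Quotient.exact hxy
    by_contra hne
    have hne : x ≠ y := fun h => hne (Subtype.ext h)
    obtain ⟨s, hs, hsd⟩ := hS x y (adj_of_trueTwin hne htwin)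
    rw [Finset.mem_compl] at hx hy
    exact hsd (dist_eq_of_trueTwin htwin (ne_of_mem_of_not_mem hs hx) (ne_of_mem_of_not_mem hs hy))
  have hcompl := Nat.card_le_card_of_injective _ hinj
  rw [Nat.card_eq_fintype_card, Fintype.card_coe, Finset.card_compl] at hcompl
  omega

lemma card_sub_card_trueTwin_le_localMetricDim [Fintype α] (G : SimpleGraph α) :
    Fintype.card α - Nat.card (Quotient (trueTwinSetoid G)) ≤ localMetricDim G := by
  obtain ⟨S, hcard, hS⟩ := exists_isLocalMetricGenerator_card_eq_localMetricDim G
  exact hcard ▸ hS.card_sub_card_trueTwin_le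

end LocalMetricDim

section Distance

lemma Walk.le_add_length_of_forall_adj (f : α → ℕ) (hf : ∀ u v, G.Adj u v → f u ≤ f v + 1)
    {u v : α} (p : G.Walk u v) : f u ≤ f v + p.length := by
  induction p with
  | nil => simp
  | @cons u w v h p ih =>
    have := hf u w h
    rw [Walk.length_cons]
    omega

lemma dist_le_dist_add_one_of_eq_or_adj {u v : α} (h : u = v ∨ G.Adj u v) (w : α) :
    G.dist u w ≤ G.dist v w + 1 := by
  rcases h with rfl | h
  · exact Nat.le_succ _
  · simpa [dist_eq_one_iff_adj.mpr h, Nat.add_comm] using h.reachable.dist_triangle_left w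

end Distance

section StrongProduct

lemma strongProd_adj_fst {x y : α × β} (h : (strongProd G H).Adj x y) :
    x.1 = y.1 ∨ G.Adj x.1 y.1 := by
  rcases h with h | h | h <;> tauto

lemma strongProd_adj_snd {x y : α × β} (h : (strongProd G H).Adj x y) :
    x.2 = y.2 ∨ H.Adj x.2 y.2 := by
  rcases h with h | h | h <;> tauto

lemma insert_neighborSet_strongProd (x : α × β) :
    insert x ((strongProd G H).neighborSet x) =
      insert x.1 (G.neighborSet x.1) ×ˢ insert x.2 (H.neighborSet x.2) := by
  ext ⟨c, d⟩
  simp only [Set.mem_insert_iff, mem_neighborSet, Set.mem_prod, Prod.ext_iff, strongProd]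
  constructor
  · rintro (⟨h1, h2⟩ | (⟨h1, h2⟩ | ⟨h1, h2⟩ | ⟨h1, h2⟩)) <;> tauto
  · rintro ⟨h1 | h1, h2 | h2⟩ <;> subst_vars <;> tauto

lemma trueTwinSetoid_strongProd :
    trueTwinSetoid (strongProd G H) = (trueTwinSetoid G).prod (trueTwinSetoid H) := by
  ext x y
  change insert x _ = insert y _ ↔ insert x.1 _ = insert y.1 _ ∧ insert x.2 _ = insert y.2 _
  rw [insert_neighborSet_strongProd, insert_neighborSet_strongProd,
    Set.prod_eq_prod_iff_of_nonempty ⟨x, Set.mem_insert _ _, Set.mem_insert _ _⟩]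

lemma card_trueTwin_strongProd :
    Nat.card (Quotient (trueTwinSetoid (strongProd G H))) =
      Nat.card (Quotient (trueTwinSetoid G)) * Nat.card (Quotient (trueTwinSetoid H)) := by
  rw [trueTwinSetoid_strongProd, ← Nat.card_prod]
  exact Nat.card_congr (Setoid.prodQuotientEquiv _ _).symm

lemma exists_walk_strongProd_length_eq_max {a c : α} {b d : β} (p : G.Walk a c)
    (q : H.Walk b d) :
    ∃ w : (strongProd G H).Walk (a, b) (c, d), w.length = max p.length q.length := by
  induction p generalizing b with
  | @nil a =>
    induction q with
    | nil => exact ⟨Walk.nil, rfl⟩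
    | @cons b b' d hb q ih =>
      obtain ⟨w, hw⟩ := ih
      have hadj : (strongProd G H).Adj (a, b) (a, b') := Or.inl ⟨rfl, hb⟩
      exact ⟨Walk.cons hadj w, by simp [hw]⟩
  | @cons a a' c ha p ih =>
    cases q with
    | nil =>
      obtain ⟨w, hw⟩ := ih Walk.nil
      have hadj : (strongProd G H).Adj (a, d) (a', d) := Or.inr (Or.inl ⟨rfl, ha⟩)
      exact ⟨Walk.cons hadj w, by simp [hw]⟩
    | @cons _ b' _ hb q =>
      obtain ⟨w, hw⟩ := ih q
      have hadj : (strongProd G H).Adj (a, b) (a', b') := Or.inr (Or.inr ⟨ha, hb⟩)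
      exact ⟨Walk.cons hadj w, by simp [hw, Nat.succ_max_succ]⟩

lemma Connected.strongProd (hG : G.Connected) (hH : H.Connected) :
    (strongProd G H).Connected := by
  have : Nonempty (α × β) := ⟨(hG.nonempty.some, hH.nonempty.some)⟩
  refine ⟨fun x y => ?_⟩
  obtain ⟨w, -⟩ := exists_walk_strongProd_length_eq_max (hG x.1 y.1).some (hH x.2 y.2).some
  exact ⟨w⟩

lemma dist_strongProd (hG : G.Connected) (hH : H.Connected) (x y : α × β) :
    (strongProd G H).dist x y = max (G.dist x.1 y.1) (H.dist x.2 y.2) := by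
  apply le_antisymm
  · obtain ⟨p, hp⟩ := hG.exists_walk_length_eq_dist x.1 y.1
    obtain ⟨q, hq⟩ := hH.exists_walk_length_eq_dist x.2 y.2
    obtain ⟨w, hw⟩ := exists_walk_strongProd_length_eq_max p q
    exact (dist_le w).trans_eq (by rw [hw, hp, hq])
  · obtain ⟨w, hw⟩ := (hG.strongProd hH).exists_walk_length_eq_dist x y
    have hfst := w.le_add_length_of_forall_adj (fun z => G.dist z.1 y.1) fun _ _ huv =>
      dist_le_dist_add_one_of_eq_or_adj (strongProd_adj_fst huv) _
    have hsnd := w.le_add_length_of_forall_adj (fun z => H.dist z.2 y.2) fun _ _ huv =>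
      dist_le_dist_add_one_of_eq_or_adj (strongProd_adj_snd huv) _
    simp only [SimpleGraph.dist_self, zero_add, hw] at hfst hsnd
    exact max_le hfst hsnd

lemma _root_.IsLocalMetricGenerator.strongProd (hG : G.Connected) (hH : H.Connected)
    {S₁ : Set α} {S₂ : Set β}
    (h₁ : IsLocalMetricGenerator G S₁) (h₂ : IsLocalMetricGenerator H S₂) :
    IsLocalMetricGenerator (strongProd G H) (S₁ ×ˢ Set.univ ∪ Set.univ ×ˢ S₂) := by
  rintro ⟨a, b⟩ ⟨c, d⟩ hadj
  simp only [Set.mem_union, Set.mem_prod, Set.mem_univ, and_true, true_and,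
    dist_strongProd hG hH]
  rcases hadj with ⟨rfl, hbd⟩ | ⟨rfl, hac⟩ | ⟨hac, hbd⟩
  · obtain ⟨y, hy, hyd⟩ := h₂ b d hbd
    exact ⟨(a, y), Or.inr hy, by simpa using hyd⟩
  · obtain ⟨x, hx, hxd⟩ := h₁ a c hac
    exact ⟨(x, b), Or.inl hx, by simpa using hxd⟩
  · obtain ⟨x, hx, hxd⟩ := h₁ a c hac
    have hbd' : H.dist b d = 1 := dist_eq_one_iff_adj.mpr hbd
    have hdb' : H.dist d b = 1 := dist_eq_one_iff_adj.mpr hbd.symm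
    -- Put the landmark in the layer of the endpoint nearer to `x`: the farther endpoint is at
    -- `G`-distance at least one from `x`, which dominates its `H`-distance to that layer.
    rcases lt_or_gt_of_ne hxd with hlt | hlt
    · refine ⟨(x, b), Or.inl hx, ?_⟩
      simp only [SimpleGraph.dist_self, hdb']
      omega
    · refine ⟨(x, d), Or.inl hx, ?_⟩
      simp only [SimpleGraph.dist_self, hbd']
      omega

lemma localMetricDim_strongProd_le [Fintype α] [Fintype β] (hG : G.Connected)
    (hH : H.Connected) :
    localMetricDim (strongProd G H) ≤ Fintype.card α * Fintype.card β
      - (Fintype.card α - localMetricDim G) * (Fintype.card β - localMetricDim H) := by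
  classical
  obtain ⟨S₁, hcard₁, hS₁⟩ := exists_isLocalMetricGenerator_card_eq_localMetricDim G
  obtain ⟨S₂, hcard₂, hS₂⟩ := exists_isLocalMetricGenerator_card_eq_localMetricDim H
  refine Nat.sInf_le ⟨(S₁ᶜ ×ˢ S₂ᶜ)ᶜ, ?_, ?_⟩
  · rw [Finset.card_compl, Finset.card_product, Finset.card_compl, Finset.card_compl,
      hcard₁, hcard₂, Fintype.card_prod]
  · convert hS₁.strongProd hG hH hS₂ using 1
    ext ⟨x, y⟩
    simp [or_iff_not_imp_left]

end StrongProduct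

end SimpleGraph

theorem stmt6_general {α β : Type*} [Fintype α] [Fintype β]
    (G : SimpleGraph α) (H : SimpleGraph β)
    (hG : G.Connected) (hH : H.Connected)
    (t1 t2 : ℕ)
    (ht1 : Nat.card (Quotient (trueTwinSetoid G)) = t1)
    (ht2 : Nat.card (Quotient (trueTwinSetoid H)) = t2)
    (hdimG : localMetricDim G = Fintype.card α - t1)
    (hdimH : localMetricDim H = Fintype.card β - t2) :
    localMetricDim (strongProd G H) = Fintype.card α * Fintype.card β - t1 * t2 := by
  have ht1_le : t1 ≤ Fintype.card α := ht1 ▸ card_trueTwin_le G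
  have ht2_le : t2 ≤ Fintype.card β := ht2 ▸ card_trueTwin_le H
  apply le_antisymm
  · have hupper := localMetricDim_strongProd_le hG hH
    rwa [hdimG, hdimH, Nat.sub_sub_self ht1_le, Nat.sub_sub_self ht2_le] at hupper
  · have hlower := card_sub_card_trueTwin_le_localMetricDim (strongProd G H)
    rwa [card_trueTwin_strongProd, ht1, ht2, Fintype.card_prod] at hlower

/-- if `dim_l(G) = n₁ − t₁` and `dim_l(H) = n₂ − t₂`, then
`dim_l(G ⊠ H) = n₁n₂ − t₁t₂`. -/
theorem stmt6 {α β : Type*} [Fintype α] [Fintype β]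
    (G : SimpleGraph α) (H : SimpleGraph β)
    (hG : G.Connected) (hH : H.Connected)
    (hn1 : 2 ≤ Fintype.card α) (hn2 : 2 ≤ Fintype.card β)
    (t1 t2 : ℕ)
    (ht1 : Nat.card (Quotient (trueTwinSetoid G)) = t1)
    (ht2 : Nat.card (Quotient (trueTwinSetoid H)) = t2)
    (hdimG : localMetricDim G = Fintype.card α - t1)
    (hdimH : localMetricDim H = Fintype.card β - t2) :
    localMetricDim (strongProd G H) = Fintype.card α * Fintype.card β - t1 * t2 :=
  stmt6_general G H hG hH t1 t2 ht1 ht2 hdimG hdimH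
end
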